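/- arXiv:1711.03578 — 2 statements merged into one kernel-verified Lean document; each statement's English description precedes it below -/
import Mathlib

section
/- Let D_k = (2·k!, 3·k!] for k ≥ 1 and μ_k({i}) = 1/k! for i ∈ D_k, 0 otherwise. Then the ideal I = Exh(sup_k μ_k) contains the asymptotic density zero ideal Z, but I is not increasing-invariant. -/
open Filter Finset Topology

/-- `cnt A n = |A ∩ [0,n)|`. -/
noncomputable def cnt (A : Set ℕ) (n : ℕ) : ℕ := (A ∩ Set.Iio n).ncard

/-- The simple density ideal associated to a weight `g`. -/
def Zg (g : ℕ → ℝ) : Set (Set ℕ) :=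
  {A | Tendsto (fun n => (cnt A n : ℝ) / g n) atTop (𝓝 0)}

/-- The ideal of asymptotic density zero sets. -/
def Zid : Set (Set ℕ) :=
  {A | Tendsto (fun n => (cnt A n : ℝ) / n) atTop (𝓝 0)}

/-- An ideal is increasing-invariant. -/
def IncInv (I : Set (Set ℕ)) : Prop :=
  ∀ B ∈ I, ∀ C : Set ℕ, (∀ n, cnt C n ≤ cnt B n) → C ∈ I

/-- Tallness. -/
def Tall (I : Set (Set ℕ)) : Prop :=
  ∀ A : Set ℕ, A.Infinite → ∃ B ⊆ A, B.Infinite ∧ B ∈ I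

/-- The conditions on `f` for the Erdős–Ulam ideal `EU f` to be defined. -/
def EUcond (f : ℕ → ℝ) : Prop :=
  (∀ n, 0 ≤ f n) ∧ Tendsto (fun n => ∑ i ∈ Finset.range n, f i) atTop atTop ∧
    Tendsto (fun n => f n / ∑ i ∈ Finset.range (n + 1), f i) atTop (𝓝 0)

/-- The Erdős–Ulam ideal associated to `f`. -/
def EU (f : ℕ → ℝ) : Set (Set ℕ) :=
  {A | Tendsto
    (fun n => (∑ i ∈ Finset.range n, Set.indicator A f i) / ∑ i ∈ Finset.range n, f i)
    atTop (𝓝 0)}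

/-- Being an Erdős–Ulam ideal. -/
def IsEUIdeal (I : Set (Set ℕ)) : Prop := ∃ f : ℕ → ℝ, EUcond f ∧ I = EU f
/-- The `k`-th measure from STATEMENT 12 applied to a set `A`: uniform with
value `1/k!` on `D_k = (2·k!, 3·k!]`. -/
noncomputable def mu12 (k : ℕ) (A : Set ℕ) : ℝ :=
  ∑ i ∈ Finset.Ico (2 * k.factorial + 1) (3 * k.factorial + 1),
    Set.indicator A (fun _ => (1 : ℝ) / k.factorial) i

open Classical in
lemma mu12_eq (k : ℕ) (A : Set ℕ) :
    mu12 k A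
    = ((Finset.Ico (2 * k.factorial + 1) (3 * k.factorial + 1)).filter (· ∈ A)).card
        * ((1:ℝ) / k.factorial) := by
  unfold mu12
  rw [← Finset.sum_filter_add_sum_filter_not _ (· ∈ A)]
  have h1 : ∀ i ∈ (Finset.Ico (2 * k.factorial + 1) (3 * k.factorial + 1)).filter (· ∈ A),
      Set.indicator A (fun _ => (1 : ℝ) / k.factorial) i = (1:ℝ)/k.factorial := by
    intro i hi
    simp only [Finset.mem_filter] at hi
    simp [Set.indicator_of_mem hi.2]
  have h2 : ∀ i ∈ (Finset.Ico (2 * k.factorial + 1) (3 * k.factorial + 1)).filter (¬ · ∈ A),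
      Set.indicator A (fun _ => (1 : ℝ) / k.factorial) i = 0 := by
    intro i hi
    simp only [Finset.mem_filter] at hi
    simp [Set.indicator_of_notMem hi.2]
  rw [Finset.sum_congr rfl h1, Finset.sum_congr rfl h2]
  simp [mul_comm]

lemma mu12_nonneg (k : ℕ) (A : Set ℕ) : 0 ≤ mu12 k A := by
  unfold mu12
  apply Finset.sum_nonneg
  intro i _
  apply Set.indicator_nonneg
  intro x _
  positivity

/-- `B = ⋃_{k ≥ 1} (k!, 2k!]`. -/
def Bset : Set ℕ := {m | ∃ k, 1 ≤ k ∧ k.factorial < m ∧ m ≤ 2 * k.factorial}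

/-- `C = ⋃_{k ≥ 1} (2k!, 3k!]`. -/
def Cset : Set ℕ := {m | ∃ k, 1 ≤ k ∧ 2 * k.factorial < m ∧ m ≤ 3 * k.factorial}

/-- The blocks `(k!, 2k!]` are pairwise disjoint. -/
lemma blockB_disj {j k x : ℕ} (hj : 1 ≤ j) (hk : 1 ≤ k)
    (h1 : j.factorial < x) (h2 : x ≤ 2 * j.factorial)
    (h3 : k.factorial < x) (h4 : x ≤ 2 * k.factorial) : j = k := by
  rcases lt_trichotomy j k with h | h | h
  · have hle : (j+1).factorial ≤ k.factorial := Nat.factorial_le h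
    have h2j : 2 * j.factorial ≤ (j+1).factorial := by
      rw [Nat.factorial_succ]
      have := j.factorial_pos
      nlinarith
    omega
  · exact h
  · have hle : (k+1).factorial ≤ j.factorial := Nat.factorial_le h
    have h2k : 2 * k.factorial ≤ (k+1).factorial := by
      rw [Nat.factorial_succ]
      have := k.factorial_pos
      nlinarith
    omega

open Classical in
noncomputable def fmap (m : ℕ) : ℕ :=
  if h : m ∈ Cset then m - (Classical.choose h).factorial else m

lemma fmap_le (m : ℕ) : fmap m ≤ m := by
  unfold fmap
  split <;> omega

lemma fmap_spec {m : ℕ} (h : m ∈ Cset) :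
    ∃ k, 1 ≤ k ∧ k.factorial < fmap m ∧ fmap m ≤ 2 * k.factorial ∧
      fmap m = m - k.factorial ∧ 2 * k.factorial < m := by
  have hch := Classical.choose_spec h
  have hfm : fmap m = m - (Classical.choose h).factorial := by
    unfold fmap; rw [dif_pos h]
  exact ⟨Classical.choose h, hch.1, by omega, by omega, hfm, hch.2.1⟩

lemma fmap_injOn : Set.InjOn fmap Cset := by
  intro m1 h1 m2 h2 heq
  obtain ⟨k1, hk1, ha1, hb1, hc1, hd1⟩ := fmap_spec h1
  obtain ⟨k2, hk2, ha2, hb2, hc2, hd2⟩ := fmap_spec h2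
  have : k1 = k2 := blockB_disj hk1 hk2 (heq ▸ ha1) (heq ▸ hb1) ha2 hb2
  subst this
  have hf1 : k1.factorial ≤ m1 := by omega
  have hf2 : k1.factorial ≤ m2 := by omega
  omega

lemma fmap_memB {m : ℕ} (h : m ∈ Cset) : fmap m ∈ Bset := by
  obtain ⟨k, hk, ha, hb, _, _⟩ := fmap_spec h
  exact ⟨k, hk, ha, hb⟩

lemma cnt_CB (n : ℕ) : cnt Cset n ≤ cnt Bset n := by
  have hsub : fmap '' (Cset ∩ Set.Iio n) ⊆ Bset ∩ Set.Iio n := by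
    rintro _ ⟨m, ⟨hm, hmn⟩, rfl⟩
    exact ⟨fmap_memB hm, lt_of_le_of_lt (fmap_le m) hmn⟩
  have hfin : (Bset ∩ Set.Iio n).Finite :=
    (Set.finite_Iio n).subset Set.inter_subset_right
  calc cnt Cset n = (fmap '' (Cset ∩ Set.Iio n)).ncard :=
        (Set.ncard_image_of_injOn (fmap_injOn.mono Set.inter_subset_left)).symm
    _ ≤ (Bset ∩ Set.Iio n).ncard := Set.ncard_le_ncard hsub hfin
    _ = cnt Bset n := rfl

lemma B_not_in_D {k m : ℕ} (hk : 2 ≤ k) (hm : m ∈ Bset) :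
    ¬ (2 * k.factorial < m ∧ m ≤ 3 * k.factorial) := by
  rintro ⟨hlo, hhi⟩
  obtain ⟨j, hj, h1, h2⟩ := hm
  rcases le_or_gt j k with h | h
  · have : j.factorial ≤ k.factorial := Nat.factorial_le h
    omega
  · have hle : (k+1).factorial ≤ j.factorial := Nat.factorial_le h
    have : (k+1).factorial = (k+1) * k.factorial := Nat.factorial_succ k
    have h3 : 3 * k.factorial ≤ (k+1) * k.factorial := by
      have := k.factorial_pos
      nlinarith
    omega

lemma mu12_B_zero {k : ℕ} (hk : 2 ≤ k) : mu12 k Bset = 0 := by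
  unfold mu12
  apply Finset.sum_eq_zero
  intro i hi
  rw [Finset.mem_Ico] at hi
  apply Set.indicator_of_notMem
  intro hiB
  exact B_not_in_D hk hiB ⟨by omega, by omega⟩

lemma mu12_C_one {k : ℕ} (hk : 1 ≤ k) : mu12 k Cset = 1 := by
  classical
  rw [mu12_eq]
  have hfilter : (Finset.Ico (2 * k.factorial + 1) (3 * k.factorial + 1)).filter (· ∈ Cset)
      = Finset.Ico (2 * k.factorial + 1) (3 * k.factorial + 1) := by
    apply Finset.filter_true_of_mem
    intro i hi
    rw [Finset.mem_Ico] at hi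
    exact ⟨k, hk, by omega, by omega⟩
  rw [hfilter, Nat.card_Ico]
  have hpos : (0:ℝ) < (k.factorial : ℝ) := by
    exact_mod_cast k.factorial_pos
  have : (3 * k.factorial + 1 - (2 * k.factorial + 1)) = k.factorial := by omega
  rw [this]
  field_simp

/-- the ideal `Exh(sup_k μ_k)` contains `Z` but is not
increasing-invariant. -/
theorem stmt_12 :
    Zid ⊆ {A : Set ℕ | Tendsto (fun k => mu12 k A) atTop (𝓝 0)} ∧
    ¬ IncInv {A : Set ℕ | Tendsto (fun k => mu12 k A) atTop (𝓝 0)} := by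
  constructor
  · -- Zid ⊆ I
    intro A hA
    simp only [Set.mem_setOf_eq] at hA ⊢
    have hn : Tendsto (fun k : ℕ => 3 * k.factorial + 1) atTop atTop := by
      apply tendsto_atTop_mono (fun k => ?_) tendsto_id
      have := Nat.self_le_factorial k
      simp only [id]
      omega
    have hg := hA.comp hn
    apply squeeze_zero (fun k => mu12_nonneg k A)
      (g := fun k => 4 * ((cnt A (3 * k.factorial + 1) : ℝ) / (3 * k.factorial + 1)))
    · intro k
      classical
      rw [mu12_eq]
      set c := ((Finset.Ico (2 * k.factorial + 1) (3 * k.factorial + 1)).filter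
        (· ∈ A)).card with hc
      set m := cnt A (3 * k.factorial + 1) with hm
      have hcm : c ≤ m := by
        have hsub : (((Finset.Ico (2 * k.factorial + 1) (3 * k.factorial + 1)).filter
            (· ∈ A) : Finset ℕ) : Set ℕ) ⊆ A ∩ Set.Iio (3 * k.factorial + 1) := by
          intro i hi
          simp only [Finset.coe_filter, Set.mem_setOf_eq, Finset.mem_Ico] at hi
          exact ⟨hi.2, by simp; omega⟩
        have hfin : (A ∩ Set.Iio (3 * k.factorial + 1)).Finite :=
          (Set.finite_Iio _).subset Set.inter_subset_right
        calc c = (((Finset.Ico (2 * k.factorial + 1) (3 * k.factorial + 1)).filter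
              (· ∈ A) : Finset ℕ) : Set ℕ).ncard := (Set.ncard_coe_finset _).symm
          _ ≤ (A ∩ Set.Iio (3 * k.factorial + 1)).ncard := Set.ncard_le_ncard hsub hfin
          _ = m := rfl
      have hF : (0:ℝ) < (k.factorial : ℝ) := by exact_mod_cast k.factorial_pos
      have hF1 : (1:ℝ) ≤ (k.factorial : ℝ) := by exact_mod_cast k.factorial_pos
      have hN : (0:ℝ) < 3 * (k.factorial : ℝ) + 1 := by positivity
      have hcm' : (c:ℝ) ≤ (m:ℝ) := by exact_mod_cast hcm
      have hc0 : (0:ℝ) ≤ (c:ℝ) := by positivity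
      rw [mul_one_div, ← mul_div_assoc, div_le_div_iff₀ hF hN]
      nlinarith
    · have := hg.const_mul (4:ℝ)
      simpa using this
  · -- not increasing invariant
    intro hInv
    have hB : Bset ∈ {A : Set ℕ | Tendsto (fun k => mu12 k A) atTop (𝓝 0)} := by
      simp only [Set.mem_setOf_eq]
      apply Tendsto.congr' _ (tendsto_const_nhds (x := (0:ℝ)))
      filter_upwards [eventually_ge_atTop 2] with k hk
      exact (mu12_B_zero hk).symm
    have hC := hInv Bset hB Cset cnt_CB
    simp only [Set.mem_setOf_eq] at hC
    have hC1 : Tendsto (fun k => mu12 k Cset) atTop (𝓝 1) := by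
      apply Tendsto.congr' _ (tendsto_const_nhds (x := (1:ℝ)))
      filter_upwards [eventually_ge_atTop 1] with k hk
      exact (mu12_C_one hk).symm
    exact one_ne_zero (tendsto_nhds_unique hC1 hC)
end

section
/- If I is an increasing-invariant Erdős–Ulam ideal, then Z ⊆ I, where Z is the ideal of asymptotic density zero sets. -/
open Filter Finset Topology

/-!
Given `A` of density zero, cut `ℕ` into consecutive blocks whose lengths tend to `∞` but grow so
slowly that the first `cnt A n` blocks end before `n`, and let `B` consist of one point of each
block at which `f` is minimal. Then `cnt A ≤ cnt B` pointwise, so by increasing invariance it is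
enough that `B ∈ EU f`. The chosen value in a block of length `L` is at most `1 / L` times the
`f`-weight of the block, so summing (`IsLittleO.sum_range`) the weight of `B` up to a block
boundary is `o` of the total weight; in the last, incomplete block `B` has a single point, and a
single term is negligible because `f n = o(∑_{i ≤ n} f i)`.
-/

open Asymptotics

lemma cnt_mono (A : Set ℕ) : Monotone (cnt A) := fun _ _ h =>
  Set.ncard_le_ncard (Set.inter_subset_inter_right A (Set.Iio_subset_Iio h))
    ((Set.finite_Iio _).inter_of_right A)

lemma cnt_le (A : Set ℕ) (n : ℕ) : cnt A n ≤ n :=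
  (Set.ncard_le_ncard Set.inter_subset_right (Set.finite_Iio n)).trans_eq (Set.ncard_Iio_nat n)

lemma le_cnt_range {b : ℕ → ℕ} (hb : Function.Injective b) {k n : ℕ} (h : ∀ s < k, b s < n) :
    k ≤ cnt (Set.range b) n := by
  classical
  calc k = (((range k).image b : Finset ℕ) : Set ℕ).ncard := by
        rw [Set.ncard_coe_finset, card_image_of_injective _ hb, card_range]
    _ ≤ cnt (Set.range b) n := by
      refine Set.ncard_le_ncard ?_ ((Set.finite_Iio n).inter_of_right _)
      rintro _ hi
      obtain ⟨s, hs, rfl⟩ := by simpa using hi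
      exact ⟨⟨s, rfl⟩, h s hs⟩

lemma eventually_mul_le_of_tendsto_div {c : ℕ → ℕ}
    (hc : Tendsto (fun n => (c n : ℝ) / n) atTop (𝓝 0)) (K : ℕ) :
    ∀ᶠ n in atTop, K * c n ≤ n := by
  filter_upwards [hc.eventually (gt_mem_nhds (by positivity : (0 : ℝ) < 1 / (K + 1))),
    eventually_gt_atTop 0] with n hn hpos
  rw [div_lt_div_iff₀ (by positivity) (by positivity)] at hn
  have : (K : ℝ) * c n ≤ n := by nlinarith [(c n).cast_nonneg (α := ℝ)]
  exact_mod_cast this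

lemma exists_blockLengths {c : ℕ → ℕ} (hc : Monotone c) (hcle : ∀ n, c n ≤ n)
    (hc0 : Tendsto (fun n => (c n : ℝ) / n) atTop (𝓝 0)) :
    ∃ L : ℕ → ℕ, (∀ s, 0 < L s) ∧ Tendsto L atTop atTop ∧ ∀ n, ∑ s ∈ range (c n), L s ≤ n := by
  -- `L s ≤ n / c n` whenever `s < c n`; the cap `s + 1` keeps the set nonempty (avoiding the
  -- junk value `sInf ∅ = 0`) and still lets `L` tend to `∞`.
  let L s := sInf (insert (s + 1) ((fun n => n / c n) '' {n | s < c n}))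
  have hL_le : ∀ s n, s < c n → L s ≤ n / c n := fun s n h =>
    Nat.sInf_le (Set.mem_insert_of_mem _ ⟨n, h, rfl⟩)
  have hL_ge : ∀ K s, K ≤ s + 1 → (∀ n, s < c n → K * c n ≤ n) → K ≤ L s := by
    intro K s hs h
    refine le_csInf (Set.insert_nonempty _ _) ?_
    rintro _ (rfl | ⟨n, hn, rfl⟩)
    · exact hs
    · exact (Nat.le_div_iff_mul_le (Nat.zero_lt_of_lt hn)).2 (h n hn)
  refine ⟨L, fun s => hL_ge 1 s (by omega) fun n _ => by simpa using hcle n, ?_, fun n => ?_⟩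
  · refine tendsto_atTop_atTop.2 fun K => ?_
    obtain ⟨N, hN⟩ := eventually_atTop.1 (eventually_mul_le_of_tendsto_div hc0 K)
    refine ⟨K + c N, fun s hs => hL_ge K s (by omega) fun n hn => hN n ?_⟩
    by_contra! h
    have := hc h.le
    omega
  · calc ∑ s ∈ range (c n), L s ≤ ∑ _s ∈ range (c n), n / c n :=
          sum_le_sum fun s hs => hL_le s n (mem_range.1 hs)
      _ = c n * (n / c n) := by rw [sum_const, card_range, smul_eq_mul]
      _ ≤ n := Nat.mul_div_le n (c n)

lemma exists_block_ge {m : ℕ → ℕ} (hm : StrictMono m) {S₀ n : ℕ} (h : m S₀ < n) :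
    ∃ S, S₀ ≤ S ∧ m S < n ∧ n ≤ m (S + 1) := by
  classical
  have hex : ∃ S, n ≤ m (S + 1) := ⟨n, (Nat.le_succ n).trans (hm.id_le _)⟩
  refine ⟨Nat.find hex, ?_, ?_, Nat.find_spec hex⟩
  · by_contra! hlt
    exact absurd (Nat.find_spec hex) (not_le.2 ((hm.monotone hlt).trans_lt h))
  · rcases hS : Nat.find hex with _ | S
    · exact (hm.monotone (Nat.zero_le S₀)).trans_lt h
    · exact not_le.1 (Nat.find_min hex (hS ▸ Nat.lt_succ_self S))

lemma monotone_sum_range_of_nonneg {g : ℕ → ℝ} (hg : ∀ i, 0 ≤ g i) :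
    Monotone fun n => ∑ i ∈ range n, g i :=
  monotone_nat_of_le_succ fun n => by rw [sum_range_succ]; linarith [hg n]

lemma isLittleO_of_isLittleO_blocks {T F : ℕ → ℝ} (hT : Monotone T) (hT0 : 0 ≤ T)
    (hF : Monotone F) (hF0 : 0 ≤ F) {m : ℕ → ℕ} (hm : StrictMono m)
    (h : (fun S => T (m (S + 1))) =o[atTop] fun S => F (m S + 1)) : T =o[atTop] F := by
  refine isLittleO_iff.2 fun ε hε => ?_
  obtain ⟨S₀, hS₀⟩ := eventually_atTop.1 (h.bound hε)
  filter_upwards [eventually_gt_atTop (m S₀)] with n hn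
  obtain ⟨S, hS₀S, hSn, hnS⟩ := exists_block_ge hm hn
  have hS := hS₀ S hS₀S
  simp only [Real.norm_of_nonneg (hT0 _), Real.norm_of_nonneg (hF0 _)] at hS ⊢
  calc T n ≤ T (m (S + 1)) := hT hnS
    _ ≤ ε * F (m S + 1) := hS
    _ ≤ ε * F n := by gcongr; exact hF hSn

lemma isLittleO_partialSum_succ {f : ℕ → ℝ} (hf0 : ∀ n, 0 ≤ f n)
    (hratio : Tendsto (fun n => f n / ∑ i ∈ range (n + 1), f i) atTop (𝓝 0)) :
    f =o[atTop] fun n => ∑ i ∈ range (n + 1), f i :=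
  (isLittleO_iff_tendsto fun n h => le_antisymm
    (h ▸ single_le_sum (fun i _ => hf0 i) (self_mem_range_succ n)) (hf0 n)).2 hratio

section Blocks

variable {f : ℕ → ℝ} {m b : ℕ → ℕ}

lemma strictMono_bounds_of_forall_mem_Ico (hb : ∀ s, b s ∈ Ico (m s) (m (s + 1))) : StrictMono m :=
  strictMono_nat_of_lt_succ fun s => (mem_Ico.1 (hb s)).1.trans_lt (mem_Ico.1 (hb s)).2

lemma strictMono_of_forall_mem_Ico (hb : ∀ s, b s ∈ Ico (m s) (m (s + 1))) : StrictMono b :=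
  strictMono_nat_of_lt_succ fun s => (mem_Ico.1 (hb s)).2.trans_le (mem_Ico.1 (hb (s + 1))).1

lemma lt_iff_lt_of_forall_mem_Ico (hb : ∀ s, b s ∈ Ico (m s) (m (s + 1))) {s S : ℕ} :
    b s < m S ↔ s < S := by
  have hm := strictMono_bounds_of_forall_mem_Ico hb
  exact ⟨fun h => hm.lt_iff_lt.1 ((mem_Ico.1 (hb s)).1.trans_lt h),
    fun h => (mem_Ico.1 (hb s)).2.trans_le (hm.monotone h)⟩

lemma sum_indicator_range_eq_sum_comp (hb : ∀ s, b s ∈ Ico (m s) (m (s + 1))) (S : ℕ) :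
    ∑ i ∈ range (m S), (Set.range b).indicator f i = ∑ s ∈ range S, f (b s) := by
  classical
  have himage : (range (m S)).filter (· ∈ Set.range b) = (range S).image b := by
    ext i
    simp only [mem_filter, mem_range, Set.mem_range, mem_image]
    constructor
    · rintro ⟨hi, s, rfl⟩
      exact ⟨s, (lt_iff_lt_of_forall_mem_Ico hb).1 hi, rfl⟩
    · rintro ⟨s, hs, rfl⟩
      exact ⟨(lt_iff_lt_of_forall_mem_Ico hb).2 hs, s, rfl⟩
  rw [sum_indicator_eq_sum_filter, himage,
    sum_image fun s _ t _ h => (strictMono_of_forall_mem_Ico hb).injective h]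

-- `f (b s)` is at most the average of `f` over block `s`, and block lengths tend to `∞`.
lemma isLittleO_sum_blockMin (hf0 : ∀ n, 0 ≤ f n)
    (hFtop : Tendsto (fun n => ∑ i ∈ range n, f i) atTop atTop) (hm0 : m 0 = 0)
    (hb : ∀ s, b s ∈ Ico (m s) (m (s + 1)))
    (hbmin : ∀ s, ∀ j ∈ Ico (m s) (m (s + 1)), f (b s) ≤ f j)
    (hgap : Tendsto (fun s => m (s + 1) - m s) atTop atTop) :
    (fun S => ∑ s ∈ range S, f (b s)) =o[atTop] fun S => ∑ i ∈ range (m S), f i := by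
  have hm := strictMono_bounds_of_forall_mem_Ico hb
  set g := fun s => ∑ i ∈ Ico (m s) (m (s + 1)), f i
  have hg0 : ∀ s, 0 ≤ g s := fun s => sum_nonneg fun i _ => hf0 i
  have hsum_g : ∀ S, ∑ s ∈ range S, g s = ∑ i ∈ range (m S), f i := by
    intro S
    induction S with
    | zero => simp [hm0]
    | succ S ih => rw [sum_range_succ, ih, sum_range_add_sum_Ico _ (hm.monotone S.le_succ)]
  have hbg : ∀ s, ((m (s + 1) - m s : ℕ) : ℝ) * f (b s) ≤ g s := fun s => by
    simpa [nsmul_eq_mul] using card_nsmul_le_sum _ f _ (hbmin s)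
  simp only [← hsum_g]
  refine IsLittleO.sum_range ?_ hg0 (by simp only [hsum_g]; exact hFtop.comp hm.tendsto_atTop)
  refine isLittleO_iff.2 fun ε hε => ?_
  filter_upwards [hgap.eventually_ge_atTop ⌈ε⁻¹⌉₊] with s hs
  rw [Real.norm_of_nonneg (hf0 _), Real.norm_of_nonneg (hg0 s)]
  have hgap_s : ε⁻¹ ≤ ((m (s + 1) - m s : ℕ) : ℝ) := (Nat.le_ceil _).trans (by exact_mod_cast hs)
  calc f (b s) = ε * (ε⁻¹ * f (b s)) := by field_simp
    _ ≤ ε * (((m (s + 1) - m s : ℕ) : ℝ) * f (b s)) := by gcongr; exact hf0 _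
    _ ≤ ε * g s := by gcongr; exact hbg s

lemma isLittleO_blockMin (hf0 : ∀ n, 0 ≤ f n)
    (hratio : Tendsto (fun n => f n / ∑ i ∈ range (n + 1), f i) atTop (𝓝 0))
    (hb : ∀ s, b s ∈ Ico (m s) (m (s + 1)))
    (hbmin : ∀ s, ∀ j ∈ Ico (m s) (m (s + 1)), f (b s) ≤ f j) :
    (fun S => f (b S)) =o[atTop] fun S => ∑ i ∈ range (m S + 1), f i := by
  have hm := strictMono_bounds_of_forall_mem_Ico hb
  refine IsBigO.trans_isLittleO (g := fun S => f (m S)) (isBigO_of_le _ fun S => ?_)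
    ((isLittleO_partialSum_succ hf0 hratio).comp_tendsto hm.tendsto_atTop)
  rw [Real.norm_of_nonneg (hf0 _), Real.norm_of_nonneg (hf0 _)]
  exact hbmin S (m S) (left_mem_Ico.2 (hm (Nat.lt_succ_self S)))

theorem range_mem_EU (hf0 : ∀ n, 0 ≤ f n)
    (hFtop : Tendsto (fun n => ∑ i ∈ range n, f i) atTop atTop)
    (hratio : Tendsto (fun n => f n / ∑ i ∈ range (n + 1), f i) atTop (𝓝 0)) (hm0 : m 0 = 0)
    (hb : ∀ s, b s ∈ Ico (m s) (m (s + 1)))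
    (hbmin : ∀ s, ∀ j ∈ Ico (m s) (m (s + 1)), f (b s) ≤ f j)
    (hgap : Tendsto (fun s => m (s + 1) - m s) atTop atTop) :
    Set.range b ∈ EU f := by
  have hF := monotone_sum_range_of_nonneg hf0
  have hT0 : ∀ i, 0 ≤ (Set.range b).indicator f i := Set.indicator_nonneg fun i _ => hf0 i
  have hblocks : (fun S => ∑ i ∈ range (m (S + 1)), (Set.range b).indicator f i)
      =o[atTop] fun S => ∑ i ∈ range (m S + 1), f i := by
    simp only [sum_indicator_range_eq_sum_comp hb, sum_range_succ fun s => f (b s)]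
    refine IsLittleO.add ?_ (isLittleO_blockMin hf0 hratio hb hbmin)
    refine (isLittleO_sum_blockMin hf0 hFtop hm0 hb hbmin hgap).trans_isBigO
      (isBigO_of_le _ fun S => ?_)
    rw [Real.norm_of_nonneg (sum_nonneg fun i _ => hf0 i),
      Real.norm_of_nonneg (sum_nonneg fun i _ => hf0 i)]
    exact hF (Nat.le_succ _)
  exact (isLittleO_of_isLittleO_blocks (monotone_sum_range_of_nonneg hT0)
    (fun n => sum_nonneg fun i _ => hT0 i) hF (fun n => sum_nonneg fun i _ => hf0 i)
    (strictMono_bounds_of_forall_mem_Ico hb) hblocks).tendsto_div_nhds_zero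

end Blocks

/-- every increasing-invariant Erdős–Ulam ideal contains `Z`. -/
theorem stmt_13 (f : ℕ → ℝ) (hf : EUcond f) (hinv : IncInv (EU f)) :
    Zid ⊆ EU f := by
  obtain ⟨hf0, hFtop, hratio⟩ := hf
  intro A hA
  obtain ⟨L, hLpos, hLtop, hLsum⟩ := exists_blockLengths (cnt_mono A) (cnt_le A) hA
  set m : ℕ → ℕ := fun S => ∑ s ∈ range S, L s
  have hm_succ : ∀ s, m (s + 1) = m s + L s := fun s => sum_range_succ L s
  have hblock : ∀ s, ∃ i ∈ Ico (m s) (m (s + 1)), ∀ j ∈ Ico (m s) (m (s + 1)), f i ≤ f j :=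
    fun s => exists_min_image _ f (nonempty_Ico.2 (by rw [hm_succ]; linarith [hLpos s]))
  choose b hb hbmin using hblock
  have hB : Set.range b ∈ EU f := range_mem_EU hf0 hFtop hratio (sum_range_zero L) hb hbmin
    (by simpa only [hm_succ, Nat.add_sub_cancel_left] using hLtop)
  refine hinv _ hB A fun n => le_cnt_range (strictMono_of_forall_mem_Ico hb).injective fun s hs => ?_
  calc b s < m (s + 1) := (mem_Ico.1 (hb s)).2
    _ ≤ m (cnt A n) := (strictMono_bounds_of_forall_mem_Ico hb).monotone hs
    _ ≤ n := hLsum n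
end
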